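/- For any integer N ≥ 1, letting Λ = ∑_{l=1}^{N} d_l e^{iβ_l} (so Λ = D − 2N), one has ∑_{s=1}^{N} ∑_{l=1, l≠s}^{N} d_{|l-s|} e^{i(β_l - β_s)} = (N−1)Λ. -/

import Mathlib

open Real Complex Finset

noncomputable def dd (N j : ℕ) : ℝ := 1 / (Real.sin (j * π / (N + 1)))^2

noncomputable def ee (x : ℝ) : ℂ := Complex.exp (x * Complex.I)

noncomputable def βz (N : ℕ) (m : ℤ) : ℝ := 2 * π * m / (N + 1)

/-- the primitive (N+1)-st root of unity -/
noncomputable def zt (N : ℕ) : ℂ := Complex.exp (2 * π * Complex.I / (N + 1))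

noncomputable def uu (N k : ℕ) : ℂ := (1 - zt N ^ k)⁻¹

lemma zt_prim (N : ℕ) : IsPrimitiveRoot (zt N) (N + 1) := by
  have := Complex.isPrimitiveRoot_exp (N + 1) (Nat.succ_ne_zero N)
  simpa [zt] using this

lemma sum_cast_range (n : ℕ) : ∑ j ∈ range n, (j : ℂ) = n * (n - 1) / 2 := by
  induction n with
  | zero => simp
  | succ n ih => rw [Finset.sum_range_succ, ih]; push_cast; ring

lemma sum_cast_sq_range (n : ℕ) :
    ∑ j ∈ range n, (j : ℂ)^2 = n * (n - 1) * (2 * n - 1) / 6 := by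
  induction n with
  | zero => simp
  | succ n ih => rw [Finset.sum_range_succ, ih]; push_cast; ring

lemma sum_pow_zt (N j : ℕ) :
    ∑ k ∈ range (N + 1), (zt N ^ j) ^ k
      = if (N + 1) ∣ j then ((N : ℂ) + 1) else 0 := by
  by_cases h : (N + 1) ∣ j
  · rw [((zt_prim N).pow_eq_one_iff_dvd j).2 h]
    simp [h]
  · have hne : zt N ^ j ≠ 1 := fun hh => h (((zt_prim N).pow_eq_one_iff_dvd j).1 hh)
    rw [geom_sum_eq hne]
    have : (zt N ^ j) ^ (N + 1) = 1 := by
      rw [← pow_mul, mul_comm, pow_mul, ((zt_prim N).pow_eq_one_iff_dvd (N+1)).2 dvd_rfl,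
        one_pow]
    simp [h, this]

lemma insert_zero_Icc (N : ℕ) : insert 0 (Finset.Icc 1 N) = Finset.range (N + 1) := by
  ext x; simp [Nat.lt_succ_iff]; omega

lemma sum_Icc_pow_zt (N j : ℕ) :
    ∑ k ∈ Finset.Icc 1 N, (zt N ^ j) ^ k
      = (if (N + 1) ∣ j then ((N : ℂ) + 1) else 0) - 1 := by
  have h0 : (0 : ℕ) ∉ Finset.Icc 1 N := by simp
  have this : ∑ k ∈ range (N + 1), (zt N ^ j) ^ k
      = (zt N ^ j) ^ 0 + ∑ k ∈ Finset.Icc 1 N, (zt N ^ j) ^ k := by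
    rw [← insert_zero_Icc, Finset.sum_insert h0]
  rw [sum_pow_zt] at this
  simp only [pow_zero] at this
  linear_combination -this

lemma telescope {x : ℂ} {m : ℕ} (hx : x ^ m = 1) (hsum : ∑ j ∈ range m, x ^ j = 0) :
    (1 - x) * ∑ j ∈ range m, (j : ℂ) * x ^ j = -(m : ℂ) := by
  have h1 : ∑ j ∈ range m, (j : ℂ) * x ^ (j + 1)
      = (∑ j ∈ range m, (j : ℂ) * x ^ j) + m * x ^ m - ∑ j ∈ range m, x ^ (j + 1) := by
    have e1 := Finset.sum_range_succ' (fun j => (j : ℂ) * x ^ j) m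
    have e2 := Finset.sum_range_succ (fun j => (j : ℂ) * x ^ j) m
    have e3 : ∑ j ∈ range m, ((j : ℂ) + 1) * x ^ (j + 1)
        = ∑ j ∈ range m, (j : ℂ) * x ^ (j + 1) + ∑ j ∈ range m, x ^ (j + 1) := by
      rw [← Finset.sum_add_distrib]; congr 1; ext j; ring
    rw [e2] at e1
    push_cast at e1
    rw [e3] at e1
    simp only [Nat.cast_zero, zero_mul, pow_zero, add_zero] at e1
    linear_combination -e1
  have h2 : ∑ j ∈ range m, x ^ (j + 1) = x * ∑ j ∈ range m, x ^ j := by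
    rw [Finset.mul_sum]; congr 1; ext j; ring
  have h3 : x * ∑ j ∈ range m, (j : ℂ) * x ^ j = ∑ j ∈ range m, (j : ℂ) * x ^ (j + 1) := by
    rw [Finset.mul_sum]; congr 1; ext j; ring
  rw [sub_mul, one_mul, h3, h1, h2, hsum, hx]
  ring

lemma uu_eq (N k : ℕ) (hk1 : 1 ≤ k) (hk2 : k ≤ N) :
    uu N k = -(1 / ((N : ℂ) + 1)) * ∑ j ∈ range (N + 1), (j : ℂ) * (zt N ^ k) ^ j := by
  have hdvd : ¬ (N + 1) ∣ k := by
    intro h; have := Nat.le_of_dvd (by omega) h; omega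
  have hne : zt N ^ k ≠ 1 := fun hh => hdvd (((zt_prim N).pow_eq_one_iff_dvd k).1 hh)
  have hx : (zt N ^ k) ^ (N + 1) = 1 := by
    rw [← pow_mul, mul_comm, pow_mul, ((zt_prim N).pow_eq_one_iff_dvd (N+1)).2 dvd_rfl, one_pow]
  have hsum : ∑ j ∈ range (N + 1), (zt N ^ k) ^ j = 0 := by
    rw [sum_pow_zt]; simp [hdvd]
  have ht := telescope hx hsum
  have h1x : (1 : ℂ) - zt N ^ k ≠ 0 := sub_ne_zero_of_ne (Ne.symm hne)
  have key : (-(1 / ((N : ℂ) + 1))) *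
      ((1 - zt N ^ k) * ∑ j ∈ range (N + 1), (j : ℂ) * (zt N ^ k) ^ j) = 1 := by
    have hm : ((N : ℂ) + 1) ≠ 0 := by
      have h := (Nat.cast_ne_zero (R := ℂ)).mpr (Nat.succ_ne_zero N)
      push_cast at h; exact h
    rw [ht]; push_cast; field_simp
  rw [uu, inv_eq_one_div, eq_comm, eq_div_iff h1x]
  linear_combination key


lemma hm_ne (N : ℕ) : ((N : ℂ) + 1) ≠ 0 := by
  have h := (Nat.cast_ne_zero (R := ℂ)).mpr (Nat.succ_ne_zero N)
  push_cast at h; exact h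

lemma sum_uu (N : ℕ) : ∑ k ∈ Finset.Icc 1 N, uu N k = (N : ℂ) / 2 := by
  have hm := hm_ne N
  have step1 : ∑ k ∈ Finset.Icc 1 N, uu N k
      = -(1/((N:ℂ)+1)) * ∑ k ∈ Finset.Icc 1 N,
          ∑ j ∈ range (N+1), (j:ℂ) * (zt N ^ k)^j := by
    rw [Finset.mul_sum]
    refine Finset.sum_congr rfl fun k hk => ?_
    simp only [Finset.mem_Icc] at hk
    exact uu_eq N k hk.1 hk.2
  rw [step1]
  have step2 : ∑ k ∈ Finset.Icc 1 N, ∑ j ∈ range (N+1), (j:ℂ) * (zt N ^ k)^j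
      = ∑ j ∈ range (N+1), (j:ℂ) * ((if (N+1) ∣ j then ((N:ℂ)+1) else 0) - 1) := by
    rw [Finset.sum_comm]
    refine Finset.sum_congr rfl fun j hj => ?_
    rw [← Finset.mul_sum, ← sum_Icc_pow_zt]
    congr 1
    refine Finset.sum_congr rfl fun k hk => ?_
    rw [← pow_mul, ← pow_mul, mul_comm]
  rw [step2]
  have step3 : ∑ j ∈ range (N+1), (j:ℂ) * ((if (N+1) ∣ j then ((N:ℂ)+1) else 0) - 1)
      = -∑ j ∈ range (N+1), (j:ℂ) := by
    rw [show -∑ j ∈ range (N+1), (j:ℂ) = ∑ j ∈ range (N+1), -(j:ℂ) from by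
      simp [Finset.sum_neg_distrib]]
    refine Finset.sum_congr rfl fun j hj => ?_
    rcases Nat.eq_zero_or_pos j with rfl | hjpos
    · simp
    · have hnd : ¬ (N+1) ∣ j := by
        intro h
        have := Nat.le_of_dvd hjpos h
        simp only [Finset.mem_range] at hj
        omega
      rw [if_neg hnd]; ring
  rw [step3, sum_cast_range]
  push_cast
  field_simp
  ring


lemma sum_aux (n : ℕ) (c d : ℂ) : ∑ j ∈ range n, (j:ℂ) * ((c - (j:ℂ)) * d)
    = d * (c * ((n:ℂ) * ((n:ℂ)-1) / 2) - (n:ℂ)*((n:ℂ)-1)*(2*(n:ℂ)-1)/6) := by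
  induction n with
  | zero => simp
  | succ n ih => rw [Finset.sum_range_succ, ih]; push_cast; ring

lemma inner_conv (N j : ℕ) (hj1 : 1 ≤ j) (hj2 : j ≤ N) :
    ∑ i ∈ range (N+1), (i:ℂ) * (if (N+1) ∣ (j+i) then ((N:ℂ)+1) else 0)
      = (((N:ℂ) + 1) - (j:ℂ)) * ((N:ℂ)+1) := by
  rw [Finset.sum_eq_single (N+1-j)]
  · have hd : (N+1) ∣ (j + (N+1-j)) := by
      have : j + (N+1-j) = N+1 := by omega
      rw [this]
    rw [if_pos hd]
    rw [Nat.cast_sub (by omega : j ≤ N+1)]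
    push_cast; ring
  · intro i hi hne
    have hnd : ¬ (N+1) ∣ (j+i) := by
      simp only [Finset.mem_range] at hi
      rintro ⟨c, hc⟩
      have hc1 : c = 1 := by
        rcases Nat.lt_or_ge c 2 with h2 | h2
        · interval_cases c <;> omega
        · have : (N+1)*2 ≤ (N+1)*c := Nat.mul_le_mul_left _ h2
          omega
      subst hc1
      omega
    rw [if_neg hnd, mul_zero]
  · intro h
    exfalso; apply h
    simp only [Finset.mem_range]; omega

lemma sum_uu_sq (N : ℕ) : ∑ k ∈ Finset.Icc 1 N, (uu N k)^2
    = (4*(N:ℂ) - (N:ℂ)^2) / 12 := by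
  have hm := hm_ne N
  have step1 : ∑ k ∈ Finset.Icc 1 N, (uu N k)^2
      = ((1/((N:ℂ)+1))^2) * ∑ k ∈ Finset.Icc 1 N, ∑ j ∈ range (N+1),
          ∑ i ∈ range (N+1), ((j:ℂ)*(i:ℂ)) * (zt N ^ k)^(j+i) := by
    rw [Finset.mul_sum]
    refine Finset.sum_congr rfl fun k hk => ?_
    simp only [Finset.mem_Icc] at hk
    rw [uu_eq N k hk.1 hk.2]
    rw [show (-(1/((N:ℂ)+1)) * ∑ j ∈ range (N+1), (j:ℂ) * (zt N ^ k)^j)^2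
        = ((1/((N:ℂ)+1))^2) * ((∑ j ∈ range (N+1), (j:ℂ) * (zt N ^ k)^j) *
          (∑ i ∈ range (N+1), (i:ℂ) * (zt N ^ k)^i)) from by ring]
    rw [Finset.sum_mul_sum]
    congr 1
    refine Finset.sum_congr rfl fun j _ => ?_
    refine Finset.sum_congr rfl fun i _ => ?_
    rw [pow_add]; ring
  rw [step1]
  have step2 : ∑ k ∈ Finset.Icc 1 N, ∑ j ∈ range (N+1),
        ∑ i ∈ range (N+1), ((j:ℂ)*(i:ℂ)) * (zt N ^ k)^(j+i)
      = ∑ j ∈ range (N+1), ∑ i ∈ range (N+1),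
          ((j:ℂ)*(i:ℂ)) * ((if (N+1) ∣ (j+i) then ((N:ℂ)+1) else 0) - 1) := by
    rw [Finset.sum_comm]
    refine Finset.sum_congr rfl fun j _ => ?_
    rw [Finset.sum_comm]
    refine Finset.sum_congr rfl fun i _ => ?_
    rw [← Finset.mul_sum, ← sum_Icc_pow_zt]
    congr 1
    refine Finset.sum_congr rfl fun k _ => ?_
    rw [← pow_mul, ← pow_mul, mul_comm]
  rw [step2]
  have step3 : ∑ j ∈ range (N+1), ∑ i ∈ range (N+1),
        ((j:ℂ)*(i:ℂ)) * ((if (N+1) ∣ (j+i) then ((N:ℂ)+1) else 0) - 1)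
      = (∑ j ∈ range (N+1), (j:ℂ) * ∑ i ∈ range (N+1),
          (i:ℂ) * (if (N+1) ∣ (j+i) then ((N:ℂ)+1) else 0))
        - (∑ j ∈ range (N+1), (j:ℂ)) * (∑ i ∈ range (N+1), (i:ℂ)) := by
    rw [Finset.sum_mul_sum, ← Finset.sum_sub_distrib]
    refine Finset.sum_congr rfl fun j _ => ?_
    rw [Finset.mul_sum, ← Finset.sum_sub_distrib]
    refine Finset.sum_congr rfl fun i _ => ?_
    ring
  rw [step3]
  have step4 : ∑ j ∈ range (N+1), (j:ℂ) * ∑ i ∈ range (N+1),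
        (i:ℂ) * (if (N+1) ∣ (j+i) then ((N:ℂ)+1) else 0)
      = ∑ j ∈ range (N+1), (j:ℂ) * ((((N:ℂ) + 1) - (j:ℂ)) * ((N:ℂ)+1)) := by
    refine Finset.sum_congr rfl fun j hj => ?_
    rcases Nat.eq_zero_or_pos j with rfl | hjpos
    · simp
    · simp only [Finset.mem_range] at hj
      rw [inner_conv N j hjpos (by omega)]
  rw [step4, sum_aux, sum_cast_range]
  push_cast
  field_simp
  ring


lemma term_eq (N k : ℕ) (hk1 : 1 ≤ k) (hk2 : k ≤ N) :
    (dd N k : ℂ) * ee (βz N (k : ℤ)) = -4 * (uu N k - 1)^2 := by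
  have hNpos : (0:ℝ) < (N:ℝ) + 1 := by positivity
  set θ : ℝ := (k:ℝ) * π / ((N:ℝ) + 1) with hθ
  have hθpos : 0 < θ := by
    apply div_pos _ hNpos
    have : (0:ℝ) < (k:ℝ) := by exact_mod_cast hk1
    positivity
  have hθlt : θ < π := by
    rw [hθ, div_lt_iff₀ hNpos]
    have hk' : (k:ℝ) < (N:ℝ) + 1 := by exact_mod_cast Nat.lt_succ_of_le hk2
    nlinarith [Real.pi_pos]
  have hsin : Real.sin θ ≠ 0 := ne_of_gt (Real.sin_pos_of_pos_of_lt_pi hθpos hθlt)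
  set w : ℂ := Complex.exp (θ * Complex.I) with hwdef
  have hw : w ≠ 0 := Complex.exp_ne_zero _
  have hsinC : (Real.sin θ : ℂ) = (w⁻¹ - w) * Complex.I / 2 := by
    rw [Complex.ofReal_sin, Complex.sin, ← hwdef, ← Complex.exp_neg]
    rw [show -((θ:ℂ) * Complex.I) = -(θ:ℂ) * Complex.I from by ring]
  have hsin2 : ((Real.sin θ : ℝ) : ℂ)^2 = -((w⁻¹ - w)^2) / 4 := by
    rw [hsinC, div_pow, mul_pow, Complex.I_sq]; ring
  have hz : zt N ^ k = w ^ 2 := by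
    rw [zt, ← Complex.exp_nat_mul, sq, ← Complex.exp_add]
    congr 1
    rw [hθ]
    push_cast
    ring
  have hee : ee (βz N (k : ℤ)) = w ^ 2 := by
    rw [ee, βz, sq, ← Complex.exp_add]
    congr 1
    rw [hθ]
    push_cast
    ring
  have h1w : (1:ℂ) - w^2 ≠ 0 := by
    intro h
    apply Complex.ofReal_ne_zero.mpr hsin
    rw [hsinC]
    have hw2 : w * w = 1 := by rw [← sq]; linear_combination -h
    have hwi : w⁻¹ = w := inv_eq_of_mul_eq_one_left hw2
    rw [hwi]
    ring
  rw [hee, uu, hz, dd, ← hθ, Complex.ofReal_div, Complex.ofReal_pow, Complex.ofReal_one,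
    hsin2]
  have hne2 : w⁻¹ - w ≠ 0 := by
    rw [show w⁻¹ - w = (1 - w^2) * w⁻¹ from by field_simp]
    exact mul_ne_zero h1w (inv_ne_zero hw)
  field_simp
  have hX : (-1 + (w^2*2 - w^4) : ℂ) ≠ 0 := by
    intro h
    apply h1w
    have h2 : ((1:ℂ) - w^2)^2 = 0 := by linear_combination -h
    exact (pow_eq_zero_iff (by norm_num : (2:ℕ) ≠ 0)).1 h2
  have hT := mul_inv_cancel₀ hX
  ring

lemma lambda_eq (N : ℕ) : ∑ k ∈ Finset.Icc 1 N, (dd N k : ℂ) * ee (βz N (k : ℤ))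
    = ((N:ℂ)^2 - 4*(N:ℂ)) / 3 := by
  have e1 : ∑ k ∈ Finset.Icc 1 N, (dd N k : ℂ) * ee (βz N (k : ℤ))
      = ∑ k ∈ Finset.Icc 1 N, ((-4)*(uu N k)^2 + 8*(uu N k) + (-4)) := by
    refine Finset.sum_congr rfl fun k hk => ?_
    simp only [Finset.mem_Icc] at hk
    rw [term_eq N k hk.1 hk.2]
    ring
  rw [e1, Finset.sum_add_distrib, Finset.sum_add_distrib, ← Finset.mul_sum, ← Finset.mul_sum,
    Finset.sum_const, Nat.card_Icc, sum_uu, sum_uu_sq]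
  simp only [Nat.add_sub_cancel, nsmul_eq_mul]
  push_cast
  ring


lemma F_neg (N k : ℕ) (hk1 : 1 ≤ k) (hk2 : k ≤ N) :
    (dd N ((-(k:ℤ)).natAbs) : ℂ) * ee (βz N (-(k:ℤ)))
      = (dd N (N+1-k) : ℂ) * ee (βz N ((N+1-k : ℕ) : ℤ)) := by
  have hc : ((N+1-k : ℕ) : ℝ) = (N:ℝ) + 1 - (k:ℝ) := by
    push_cast [Nat.cast_sub (by omega : k ≤ N+1)]
    ring
  have hNpos : ((N:ℝ) + 1) ≠ 0 := by positivity
  have h1 : (-(k:ℤ)).natAbs = k := by simp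
  have hdd : dd N k = dd N (N+1-k) := by
    rw [dd, dd, hc]
    rw [show ((N:ℝ)+1-(k:ℝ)) * π / ((N:ℝ)+1) = π - (k:ℝ)*π/((N:ℝ)+1) from by
      field_simp]
    rw [Real.sin_pi_sub]
  have heq : ee (βz N (-(k:ℤ))) = ee (βz N ((N+1-k : ℕ) : ℤ)) := by
    rw [ee, ee, βz, βz]
    have hc2 : (((N+1-k : ℕ) : ℤ) : ℝ) = (N:ℝ) + 1 - (k:ℝ) := by
      push_cast [Nat.cast_sub (by omega : k ≤ N+1)]
      ring
    rw [hc2]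
    have hc3 : ((-(k:ℤ) : ℤ) : ℝ) = -(k:ℝ) := by push_cast; ring
    rw [hc3]
    symm
    rw [show ((2 * π * ((N:ℝ)+1-(k:ℝ)) / ((N:ℝ)+1) : ℝ) : ℂ) * Complex.I
        = 2 * (π:ℂ) * Complex.I
          + ((2 * π * (-(k:ℝ)) / ((N:ℝ)+1) : ℝ) : ℂ) * Complex.I from by
      rw [show (2 * π * ((N:ℝ)+1-(k:ℝ)) / ((N:ℝ)+1) : ℝ)
          = 2 * π + 2 * π * (-(k:ℝ)) / ((N:ℝ)+1) from by field_simp; ring]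
      push_cast
      ring]
    rw [Complex.exp_add, Complex.exp_two_pi_mul_I, one_mul]
  rw [heq, h1, hdd]

lemma dsd_inner_sum (N s : ℕ) (hs1 : 1 ≤ s) (hs2 : s ≤ N) :
    ∑ l ∈ (Finset.Icc 1 N).erase s,
        (dd N ((l : ℤ) - (s : ℤ)).natAbs : ℂ) * ee (βz N ((l : ℤ) - (s : ℤ)))
      = ∑ j ∈ (Finset.Icc 1 N).erase (N+1-s), (dd N j : ℂ) * ee (βz N (j : ℤ)) := by
  refine Finset.sum_nbij' (fun l => if s < l then l - s else l + (N+1) - s)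
    (fun j => if j ≤ N - s then j + s else j + s - (N+1)) ?_ ?_ ?_ ?_ ?_
  · intro l hl
    simp only [Finset.mem_erase, Finset.mem_Icc] at hl ⊢
    split_ifs <;> omega
  · intro j hj
    simp only [Finset.mem_erase, Finset.mem_Icc] at hj ⊢
    split_ifs <;> omega
  · intro l hl
    simp only [Finset.mem_erase, Finset.mem_Icc] at hl
    split_ifs <;> omega
  · intro j hj
    simp only [Finset.mem_erase, Finset.mem_Icc] at hj
    split_ifs <;> omega
  · intro l hl
    simp only [Finset.mem_erase, Finset.mem_Icc] at hl
    by_cases hsl : s < l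
    · rw [if_pos hsl]
      have harg : (l : ℤ) - (s : ℤ) = ((l - s : ℕ) : ℤ) := by omega
      rw [harg]
      simp
    · rw [if_neg hsl]
      have hls : l < s := by omega
      have harg : (l : ℤ) - (s : ℤ) = -(((s - l : ℕ)) : ℤ) := by omega
      rw [harg, F_neg N (s - l) (by omega) (by omega)]
      have : N + 1 - (s - l) = l + (N+1) - s := by omega
      rw [this]

theorem double_sum_diff (N : ℕ) (hN : 1 ≤ N) :
    ∑ s ∈ Finset.Icc 1 N, ∑ l ∈ (Finset.Icc 1 N).erase s,
        (dd N ((l : ℤ) - (s : ℤ)).natAbs : ℂ) * ee (βz N ((l : ℤ) - (s : ℤ)))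
      = ((N : ℂ) - 1) * ((((N : ℝ)^2 + 2 * N) / 3 : ℝ) - 2 * N) := by
  have step1 : ∑ s ∈ Finset.Icc 1 N, ∑ l ∈ (Finset.Icc 1 N).erase s,
        (dd N ((l : ℤ) - (s : ℤ)).natAbs : ℂ) * ee (βz N ((l : ℤ) - (s : ℤ)))
      = ∑ s ∈ Finset.Icc 1 N,
          ((∑ j ∈ Finset.Icc 1 N, (dd N j : ℂ) * ee (βz N (j : ℤ)))
            - (dd N (N+1-s) : ℂ) * ee (βz N ((N+1-s : ℕ) : ℤ))) := by
    refine Finset.sum_congr rfl fun s hs => ?_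
    simp only [Finset.mem_Icc] at hs
    rw [dsd_inner_sum N s hs.1 hs.2]
    rw [Finset.sum_erase_eq_sub (by simp only [Finset.mem_Icc]; omega :
      N+1-s ∈ Finset.Icc 1 N)]
  rw [step1, Finset.sum_sub_distrib, Finset.sum_const, Nat.card_Icc]
  have step2 : ∑ s ∈ Finset.Icc 1 N, (dd N (N+1-s) : ℂ) * ee (βz N ((N+1-s : ℕ) : ℤ))
      = ∑ j ∈ Finset.Icc 1 N, (dd N j : ℂ) * ee (βz N (j : ℤ)) := by
    refine Finset.sum_nbij' (fun s => N+1-s) (fun j => N+1-j) ?_ ?_ ?_ ?_ ?_ <;>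
      intro a ha <;> simp only [Finset.mem_Icc] at ha ⊢ <;> try omega
  rw [step2, lambda_eq, nsmul_eq_mul]
  push_cast
  ring
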